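/- Incomparability of M and WS: There exists an argumentation framework (S,R) and a conflict-eliminable S₁ ⊆ S such that WS(S₁) ⊈ M(S₁), and there exists an argumentation framework (S',R') and a conflict-eliminable S₁' ⊆ S' such that M(S₁') ⊈ WS(S₁'). -/

import Mathlib

namespace CoalitionArg

/-- An argument: identifier paired with capacity. -/
abbrev Arg (A : Type*) := A × ℕ

variable {A : Type*}

/-- A coherent set of arguments: finite, positive capacities, and each
identifier occurs with at most one capacity. -/
def Coherent (S : Set (Arg A)) : Prop :=
  S.Finite ∧ (∀ p ∈ S, 0 < p.2) ∧ ∀ p ∈ S, ∀ q ∈ S, p.1 = q.1 → p.2 = q.2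

/-- Attack-strength functions are modelled as `Option ℕ`-valued functions;
`none` means undefined. -/
abbrev AttFun (A : Type*) := Set (Arg A) → Arg A → Option ℕ

/-- `R` is defined at `(T, s)`. -/
def RDef (R : AttFun A) (T : Set (Arg A)) (s : Arg A) : Prop := (R T s).isSome

/-- The eight axioms of an attack-strength function. -/
structure IsAttackStrength (R : AttFun A) : Prop where
  empty_undef : ∀ s, R ∅ s = none
  subset_def : ∀ S₁ S₂ s, RDef R S₁ s → S₂ ⊆ S₁ → S₂.Nonempty → RDef R S₂ s
  union_def : ∀ S₁ S₂ s, RDef R S₁ s → RDef R S₂ s → RDef R (S₁ ∪ S₂) s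
  pos : ∀ S₁ s n, R S₁ s = some n → 0 < n
  mono_source_cap : ∀ S₁ s a n m k, R S₁ s = some k → (a, n) ∈ S₁ → n ≤ m →
      ∃ k', R ((S₁ \ {(a, n)}) ∪ {(a, m)}) s = some k' ∧ k ≤ k'
  mono_source_inter : ∀ S₁ S₂ s k₁ k₂ k, R S₁ s = some k₁ → R S₂ s = some k₂ →
      R (S₁ ∩ S₂) s = some k → k ≤ k₁ ∧ k ≤ k₂
  mono_target : ∀ S₁ a n m k, R S₁ (a, n) = some k → (∀ p ∈ S₁, p.1 ≠ a) → n ≤ m →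
      ∃ k', R S₁ (a, m) = some k' ∧ k ≤ k'
  no_self : ∀ S₁ s, s ∈ S₁ → R S₁ s = none

/-- Attack-strength axioms without (2) quasi-closure by subsets and
(3) closure by union (for the restricted framework). -/
structure IsAttackStrengthRestr (R : AttFun A) : Prop where
  empty_undef : ∀ s, R ∅ s = none
  pos : ∀ S₁ s n, R S₁ s = some n → 0 < n
  mono_source_cap : ∀ S₁ s a n m k, R S₁ s = some k → (a, n) ∈ S₁ → n ≤ m →
      ∃ k', R ((S₁ \ {(a, n)}) ∪ {(a, m)}) s = some k' ∧ k ≤ k'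
  mono_source_inter : ∀ S₁ S₂ s k₁ k₂ k, R S₁ s = some k₁ → R S₂ s = some k₂ →
      R (S₁ ∩ S₂) s = some k → k ≤ k₁ ∧ k ≤ k₂
  mono_target : ∀ S₁ a n m k, R S₁ (a, n) = some k → (∀ p ∈ S₁, p.1 ≠ a) → n ≤ m →
      ∃ k', R S₁ (a, m) = some k' ∧ k ≤ k'
  no_self : ∀ S₁ s, s ∈ S₁ → R S₁ s = none

/-- An argumentation framework: a coherent set together with an
attack-strength function. -/
structure AF (A : Type*) where
  args : Set (Arg A)
  att : AttFun A
  coherent : Coherent args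
  isAtt : IsAttackStrength att

/-- `S₁` attacks `s`. -/
def Attacks (R : AttFun A) (S₁ : Set (Arg A)) (s : Arg A) : Prop :=
  ∃ S₂ ⊆ S₁, RDef R S₂ s

/-- `S₁` defeats `s`: it attacks `s`, and the maximum attack strength over
subsets of `S₁` reaches the capacity of `s`. -/
def Defeats (R : AttFun A) (S₁ : Set (Arg A)) (s : Arg A) : Prop :=
  Attacks R S₁ s ∧ ∃ S₂ ⊆ S₁, ∃ n, R S₂ s = some n ∧
    (∀ Sx ⊆ S₁, ∀ m, R Sx s = some m → m ≤ n) ∧ s.2 ≤ n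

/-- Maximum attack strength of `S₁` on `s` (0 when `S₁` does not attack `s`). -/
noncomputable def Vmax (R : AttFun A) (S₁ : Set (Arg A)) (s : Arg A) : ℕ :=
  sSup {n | ∃ S₂ ⊆ S₁, R S₂ s = some n}

/-- Conflict-eliminability: no member is defeated by the set itself.
(`α` is defined exactly on conflict-eliminable sets.) -/
def ConfElim (R : AttFun A) (S₁ : Set (Arg A)) : Prop := ∀ s ∈ S₁, ¬ Defeats R S₁ s

/-- The intrinsic arguments of `S₁`. -/
noncomputable def alpha (R : AttFun A) (S₁ : Set (Arg A)) : Set (Arg A) :=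
  (fun s => (s.1, s.2 - Vmax R S₁ s)) '' S₁

/-- The attacks occurring inside `S₁`. -/
def Del (R : AttFun A) (S₁ : Set (Arg A)) : Set (Set (Arg A) × Arg A) :=
  {p | p.2 ∈ S₁ ∧ p.1 ⊆ S₁ ∧ RDef R p.1 p.2}

open Classical in
/-- The attack-strength function of the view of `S₁`: `R` restricted off
`Del R S₁`. -/
noncomputable def viewAtt (R : AttFun A) (S₁ : Set (Arg A)) : AttFun A :=
  fun T s => if (T, s) ∈ Del R S₁ then none else R T s

/-- The argument set of the view of `S₁` about `S`. -/
noncomputable def viewArgs (R : AttFun A) (S S₁ : Set (Arg A)) : Set (Arg A) :=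
  (S \ S₁) ∪ alpha R S₁

/-- `S₁` c-attacks `s`. -/
def CAttacks (R : AttFun A) (S₁ : Set (Arg A)) (s : Arg A) : Prop :=
  ConfElim R S₁ ∧ ∃ S₂ ⊆ alpha R S₁, RDef (viewAtt R S₁) S₂ s

/-- `S₁` c-defeats `s`. -/
def CDefeats (R : AttFun A) (S₁ : Set (Arg A)) (s : Arg A) : Prop :=
  CAttacks R S₁ s ∧ ∃ S₃ ⊆ alpha R S₁, ∃ n, viewAtt R S₁ S₃ s = some n ∧ s.2 ≤ n

/-- c-admissibility of `S₁ ⊆ S`. -/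
def CAdmissible (R : AttFun A) (S S₁ : Set (Arg A)) : Prop :=
  ConfElim R S₁ ∧
  ∀ S₂ ⊆ viewArgs R S S₁, ∀ s ∈ S₁, Attacks R S₂ s →
    ∀ Sx ⊆ S₂, RDef R Sx s → ∃ sx ∈ Sx, CDefeats R S₁ sx

/-- c-preferredness of `S₁ ⊆ S`. -/
def CPreferred (R : AttFun A) (S S₁ : Set (Arg A)) : Prop :=
  CAdmissible R S S₁ ∧ ¬ ∃ Sy, S₁ ⊂ Sy ∧ Sy ⊆ S ∧ CAdmissible R S Sy

/-- `S₁` is one-directionally attacked. -/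
def OneDirAttacked (R : AttFun A) (S S₁ : Set (Arg A)) : Prop :=
  ConfElim R S₁ ∧ ∃ Sx ⊆ viewArgs R S S₁, (∃ s ∈ S₁, Attacks R Sx s) ∧
    ∀ sx ∈ Sx, ¬ CAttacks R S₁ sx

/-- The states relation `S₁ ≼ S₂`. -/
def StateLeq (R : AttFun A) (S S₁ S₂ : Set (Arg A)) : Prop :=
  ConfElim R S₁ ∧ ConfElim R S₂ ∧
  (CAdmissible R S S₂ ∨ OneDirAttacked R S S₁ ∨
    (¬ CAdmissible R S S₁ ∧ ¬ CAdmissible R S S₂ ∧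
     ¬ OneDirAttacked R S S₁ ∧ ¬ OneDirAttacked R S S₂))

/-- Coalition permission. -/
def CoalitionPermitted (R : AttFun A) (S₁ S₂ : Set (Arg A)) : Prop :=
  S₁ ∩ S₂ = ∅ ∧ ConfElim R (S₁ ∪ S₂)

/-- The attackers of `S₁` within `S`. -/
def Attacker (R : AttFun A) (S S₁ : Set (Arg A)) : Set (Arg A) :=
  {s ∈ S | ∃ s₁ ∈ S₁, Attacks R {s} s₁}

/-- Attackers of `S₁` that `Sx` neither c-defeats nor contains. -/
def UndefAtt (R : AttFun A) (S S₁ Sx : Set (Arg A)) : Set (Arg A) :=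
  {s ∈ Attacker R S S₁ | ¬ CDefeats R Sx s ∧ s ∉ Sx}

/-- The (fewer attackers) axiom for the pair `(S₁, S₂)`. -/
noncomputable def FewerAttackers (R : AttFun A) (S S₁ S₂ : Set (Arg A)) : Prop :=
  (UndefAtt R S S₁ S₂).ncard ≤ (UndefAtt R S S₁ S₁).ncard

/-- Coalition profitability `S₁ ⊴ S₂`. -/
noncomputable def Profitable (R : AttFun A) (S S₁ S₂ : Set (Arg A)) : Prop :=
  S₁ ⊆ S₂ ∧ StateLeq R S S₁ S₂ ∧ FewerAttackers R S S₁ S₂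

/-- `Max(S₁)`: maximal profitable extensions of `S₁` within `S`. -/
noncomputable def MaxSet (R : AttFun A) (S S₁ : Set (Arg A)) : Set (Set (Arg A)) :=
  {Sx | Sx ⊆ S ∧ Profitable R S S₁ Sx ∧
    ∀ Sy, Sx ⊂ Sy → Sy ⊆ S → ¬ Profitable R S S₁ Sy}

open Classical in
/-- State rank: 2 for c-admissible, 0 for one-directionally attacked, 1 otherwise. -/
noncomputable def stateRank (R : AttFun A) (S S₁ : Set (Arg A)) : ℕ :=
  if CAdmissible R S S₁ then 2 else if OneDirAttacked R S S₁ then 0 else 1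

/-- Number of external undefeated attackers of `Sx`. -/
noncomputable def extAttCount (R : AttFun A) (S Sx : Set (Arg A)) : ℕ :=
  (UndefAtt R S Sx Sx).ncard

/-- The three comparison criteria: set size, state, external attackers. -/
inductive Crit | l | b | f

/-- `≤_β` for `β ∈ {l, b, f}`. -/
noncomputable def critLe (R : AttFun A) (S : Set (Arg A)) :
    Crit → Set (Arg A) → Set (Arg A) → Prop
  | .l, S₁, S₂ => S₁.ncard ≤ S₂.ncard
  | .b, S₁, S₂ => stateRank R S S₁ ≤ stateRank R S S₂
  | .f, S₁, S₂ => extAttCount R S S₂ ≤ extAttCount R S S₁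

/-- `<_β`. -/
noncomputable def critLt (R : AttFun A) (S : Set (Arg A))
    (c : Crit) (S₁ S₂ : Set (Arg A)) : Prop :=
  critLe R S c S₁ S₂ ∧ ¬ critLe R S c S₂ S₁

/-- Maximal profitability `S₁ ⊴_m S₂`. -/
noncomputable def ProfitableM (R : AttFun A) (S S₁ S₂ : Set (Arg A)) : Prop :=
  Profitable R S S₁ S₂ ∧ ∃ Sx ∈ MaxSet R S S₂, ∀ Sy ∈ MaxSet R S S₁,
    ∀ β : Crit, critLt R S β Sx Sy → ∃ γ : Crit, γ ≠ β ∧ critLt R S γ Sy Sx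

/-- The coalition formability semantics `W`. -/
noncomputable def Wsem (R : AttFun A) (S S₁ : Set (Arg A)) : Set (Set (Arg A)) :=
  {S₂ | S₂ ⊆ S ∧ (Profitable R S S₁ (S₁ ∪ S₂) ∨ Profitable R S S₂ (S₁ ∪ S₂))}

/-- The coalition formability semantics `M`. -/
noncomputable def Msem (R : AttFun A) (S S₁ : Set (Arg A)) : Set (Set (Arg A)) :=
  {S₂ | S₂ ⊆ S ∧ Profitable R S S₁ (S₁ ∪ S₂) ∧ Profitable R S S₂ (S₁ ∪ S₂)}

/-- The coalition formability semantics `WS`. -/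
noncomputable def WSsem (R : AttFun A) (S S₁ : Set (Arg A)) : Set (Set (Arg A)) :=
  {S₂ | S₂ ⊆ S ∧ (ProfitableM R S S₁ (S₁ ∪ S₂) ∨ ProfitableM R S S₂ (S₁ ∪ S₂))}

/-- The coalition formability semantics `S`. -/
noncomputable def Ssem (R : AttFun A) (S S₁ : Set (Arg A)) : Set (Set (Arg A)) :=
  {S₂ | S₂ ⊆ S ∧ ProfitableM R S S₁ (S₁ ∪ S₂) ∧ ProfitableM R S S₂ (S₁ ∪ S₂)}

/-- Weak continuity of `⊴` for `S₁`. -/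
noncomputable def WeaklyContinuous (R : AttFun A) (S S₁ : Set (Arg A)) : Prop :=
  ∃ Sz ∈ MaxSet R S S₁, ∀ Sw ⊆ Sz,
    CoalitionPermitted R S₁ (Sw \ S₁) → Profitable R S S₁ Sw

/-! Nielsen–Parsons argumentation frameworks. -/

/-- `A₁` NP-attacks `a` in the NP framework with attack relation `G`. -/
def NPattacks (G : Set (Set (Arg A) × Arg A)) (A₁ : Set (Arg A)) (a : Arg A) : Prop :=
  ∃ A' ⊆ A₁, (A', a) ∈ G

/-- `(Ax, a) ∈ G` is minimal. -/
def NPminimal (G : Set (Set (Arg A) × Arg A)) (Ax : Set (Arg A)) (a : Arg A) : Prop :=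
  (Ax, a) ∈ G ∧ ∀ A'', A'' ⊂ Ax → (A'', a) ∉ G

/-- NP-conflict-freeness. -/
def NPconflictFree (G : Set (Set (Arg A) × Arg A)) (A₁ : Set (Arg A)) : Prop :=
  ∀ a ∈ A₁, ¬ NPattacks G A₁ a

/-- `A₁` NP-defends `a` within `S`. -/
def NPdefends (G : Set (Set (Arg A) × Arg A)) (S A₁ : Set (Arg A)) (a : Arg A) : Prop :=
  ∀ Ax ⊆ S, NPminimal G Ax a → ∃ ax ∈ Ax, NPattacks G A₁ ax

/-- NP-admissibility. -/
def NPadmissible (G : Set (Set (Arg A) × Arg A)) (S A₁ : Set (Arg A)) : Prop :=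
  A₁ ⊆ S ∧ NPconflictFree G A₁ ∧ ∀ a ∈ A₁, NPdefends G S A₁ a

/-- NP-preferredness. -/
def NPpreferred (G : Set (Set (Arg A) × Arg A)) (S A₁ : Set (Arg A)) : Prop :=
  NPadmissible G S A₁ ∧ ¬ ∃ A₂, A₁ ⊂ A₂ ∧ A₂ ⊆ S ∧ NPadmissible G S A₂

/-- `(S, G)` is a Nielsen–Parsons argumentation framework. -/
def IsNPFramework (S : Set (Arg A)) (G : Set (Set (Arg A) × Arg A)) : Prop :=
  S.Finite ∧ ∀ p ∈ G, p.1.Nonempty ∧ p.1 ⊆ S ∧ p.2 ∈ S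

end CoalitionArg

/-!
Both counterexamples use attack strengths generated by a graph on identifiers: a nonempty set
attacks `s` when each of its members has an edge to `s`, with strength 2 if some member of
capacity at least 2 has a strong edge to `s`, and 1 otherwise. Such a function satisfies the
eight axioms, its maximal strength `edgeStrength` is explicit, and every notion in the statement
becomes a finite check.

`WS ⊈ M`: in `{(0,2), (1,1)}` with `1 → 0`, the coalition `{(0,2)}` cannot answer the attack of
`(1,1)`, so it is not c-admissible and `∅ ⋬ {(0,2)}`; yet the whole framework is its only maximal
profitable extension, so `{(0,2)} ⊴_m {(0,2)}` and `∅ ∈ WS({(0,2)})`.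

`M ⊈ WS`: take `0, 1, 2, 3` of capacity 2 and `4, 5` of capacity 1, with edges `2, 5 → 0` and
`3, 4 → 1` and strong edges `0 → 3`, `1 → 2`. Both `{0}` and `{1}` are one-directionally attacked
and both profit from `{0, 1}`, so `{1} ∈ M({0})`. The only maximal extension of `{0, 1}` adds
`4` and `5`, whose attacks wear the capacities of `0` and `1` down to 1, so that the strong attacks
on `2` and `3` fall to strength 1. It is thus one-directionally attacked (by `4`), in the worst
state, with the two undefeated outside attackers `2` and `3`, while `{0}` and `{1}` have maximal
extensions `{0, 2, 4, 5}` and `{1, 3, 4, 5}` of the same size with one each: it loses on attackers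
with no compensation, and neither `{0} ⊴_m {0, 1}` nor `{1} ⊴_m {0, 1}`.
-/

namespace CoalitionArg

variable {A : Type*}

section Generic

variable {R : AttFun A} {S X Y : Set (Arg A)} {s : Arg A}

lemma viewAtt_of_notMem (hs : s ∉ X) (T : Set (Arg A)) : viewAtt R X T s = R T s :=
  if_neg fun hDel => hs hDel.1

lemma CAttacks.attacks_alpha (h : CAttacks R X s) : Attacks R (alpha R X) s := by
  obtain ⟨-, T, hT, hdef⟩ := h
  refine ⟨T, hT, ?_⟩
  unfold RDef viewAtt at *
  split_ifs at hdef
  · simp at hdef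
  · exact hdef

lemma cDefeats_iff_of_notMem (hs : s ∉ X) :
    CDefeats R X s ↔ ConfElim R X ∧ Attacks R (alpha R X) s ∧
      ∃ T ⊆ alpha R X, ∃ n, R T s = some n ∧ s.2 ≤ n := by
  simp only [CDefeats, CAttacks, Attacks, RDef, viewAtt_of_notMem hs, and_assoc]

lemma cAdmissible_empty : CAdmissible R S ∅ :=
  ⟨fun _ h => h.elim, fun _ _ _ h => h.elim⟩

lemma not_oneDirAttacked_empty : ¬ OneDirAttacked R S ∅ :=
  fun ⟨_, _, _, ⟨_, h, _⟩, _⟩ => h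

lemma stateLeq_empty_iff : StateLeq R S ∅ X ↔ CAdmissible R S X := by
  refine ⟨?_, fun h => ⟨fun _ h => h.elim, h.1, Or.inl h⟩⟩
  rintro ⟨-, -, h | h | ⟨h, -⟩⟩
  exacts [h, (not_oneDirAttacked_empty h).elim, (h cAdmissible_empty).elim]

lemma not_cAdmissible_of_not_cDefeats {sx : Arg A} (hsx : sx ∈ viewArgs R S X) (hs : s ∈ X)
    (hdef : RDef R {sx} s) (hnd : ¬ CDefeats R X sx) : ¬ CAdmissible R S X := by
  rintro ⟨-, h⟩
  obtain ⟨_, rfl, hcd⟩ := h {sx} (by simpa using hsx) s hs ⟨{sx}, subset_rfl, hdef⟩ {sx}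
    subset_rfl hdef
  exact hnd hcd

lemma oneDirAttacked_of_not_attacks_alpha {sx : Arg A} (hX : ConfElim R X)
    (hsx : sx ∈ viewArgs R S X) (hs : s ∈ X) (hatt : Attacks R {sx} s)
    (hα : ¬ Attacks R (alpha R X) sx) : OneDirAttacked R S X :=
  ⟨hX, {sx}, by simpa using hsx, ⟨s, hs, hatt⟩, by simpa using mt CAttacks.attacks_alpha hα⟩

lemma Profitable.confElim (h : Profitable R S X Y) : ConfElim R Y := h.2.1.2.1

lemma profitable_refl (hX : ConfElim R X) : Profitable R S X X := by
  refine ⟨subset_rfl, ⟨hX, hX, ?_⟩, le_rfl⟩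
  by_cases hadm : CAdmissible R S X
  · exact Or.inl hadm
  by_cases hod : OneDirAttacked R S X
  · exact Or.inr (Or.inl hod)
  · exact Or.inr (Or.inr ⟨hadm, hadm, hod, hod⟩)

lemma profitable_of_oneDirAttacked (hXY : X ⊆ Y) (hX : OneDirAttacked R S X)
    (hY : ConfElim R Y) (hf : FewerAttackers R S X Y) : Profitable R S X Y :=
  ⟨hXY, ⟨hX.1, hY, Or.inr (Or.inl hX)⟩, hf⟩

lemma undefAtt_eq_of_forall_mem {T : Set (Arg A)} (hTS : T ⊆ S)
    (h : ∀ s ∈ S, s ∈ UndefAtt R S X Y ↔ s ∈ T) : UndefAtt R S X Y = T :=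
  Set.ext fun s => ⟨fun hs => (h s hs.1.1).1 hs, fun hs => (h s (hTS hs)).2 hs⟩

lemma undefAtt_self_eq_empty : UndefAtt R S X S = ∅ :=
  Set.eq_empty_iff_forall_notMem.2 fun _ h => h.2.2 h.1.1

lemma maxSet_eq_singleton_of_profitable (h : Profitable R S X S) : MaxSet R S X = {S} := by
  ext Sx
  refine ⟨fun ⟨hS, _, hmax⟩ => ?_, ?_⟩
  · by_contra hne
    exact hmax S (hS.ssubset_of_ne hne) subset_rfl h
  · rintro rfl
    exact ⟨subset_rfl, h, fun Sy hSy hS => (hSy.not_subset hS).elim⟩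

lemma not_critLt_self {β : Crit} : ¬ critLt R S β X X := by
  cases β <;> exact fun h => h.2 h.1

lemma profitableM_self_of_profitable (hX : ConfElim R X) (h : Profitable R S X S) :
    ProfitableM R S X X := by
  refine ⟨profitable_refl hX, S, by simp [maxSet_eq_singleton_of_profitable h], ?_⟩
  intro Sy hSy β hlt
  rw [maxSet_eq_singleton_of_profitable h, Set.mem_singleton_iff] at hSy
  exact (not_critLt_self (hSy ▸ hlt)).elim

lemma eq_of_mem_maxSet {Sx T : Set (Arg A)} (hSx : Sx ∈ MaxSet R S X) (hSxT : Sx ⊆ T)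
    (hTS : T ⊆ S) (hT : Profitable R S X T) : Sx = T := by
  by_contra hne
  exact hSx.2.2 T (hSxT.ssubset_of_ne hne) hTS hT

lemma not_profitableM_of_worse_maximum {T T' : Set (Arg A)}
    (hmax : ∀ Sx ∈ MaxSet R S Y, Sx = T) (hT' : T' ∈ MaxSet R S X)
    (hrank : stateRank R S T = 0) (hcard : T.ncard ≤ T'.ncard)
    (hext : extAttCount R S T' < extAttCount R S T) : ¬ ProfitableM R S X Y := by
  rintro ⟨-, Sx, hSx, h⟩
  obtain rfl := hmax Sx hSx
  obtain ⟨γ, hγ, hlt⟩ := h T' hT' .f ⟨hext.le, hext.not_ge⟩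
  cases γ with
  | l => exact hlt.2 hcard
  | b => exact hlt.2 (by simp [critLe, hrank])
  | f => exact hγ rfl

end Generic

section EdgeGenerated

variable {E SE : A → A → Prop} {S T X Y : Set (Arg A)} {s : Arg A} {n : ℕ}

open Classical in
noncomputable def edgeR (E SE : A → A → Prop) : AttFun A := fun T s =>
  if T.Nonempty ∧ ∀ p ∈ T, E p.1 s.1 then
    some (if ∃ p ∈ T, SE p.1 s.1 ∧ 2 ≤ p.2 then 2 else 1)
  else none

open Classical in
noncomputable def edgeStrength (E SE : A → A → Prop) (Y : Set (Arg A)) (s : Arg A) : ℕ :=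
  if ∃ p ∈ Y, E p.1 s.1 ∧ SE p.1 s.1 ∧ 2 ≤ p.2 then 2
  else if ∃ p ∈ Y, E p.1 s.1 then 1 else 0

open Classical in
lemma edgeR_eq_some_iff : edgeR E SE T s = some n ↔
    (T.Nonempty ∧ ∀ p ∈ T, E p.1 s.1) ∧
      n = if ∃ p ∈ T, SE p.1 s.1 ∧ 2 ≤ p.2 then 2 else 1 := by
  unfold edgeR
  by_cases h : T.Nonempty ∧ ∀ p ∈ T, E p.1 s.1
  · rw [if_pos h, Option.some.injEq, eq_comm]
    exact (and_iff_right h).symm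
  · rw [if_neg h]
    exact iff_of_false (by simp) fun h' => h h'.1

lemma rDef_edgeR_iff : RDef (edgeR E SE) T s ↔ T.Nonempty ∧ ∀ p ∈ T, E p.1 s.1 := by
  simp [RDef, Option.isSome_iff_exists, edgeR_eq_some_iff]

theorem isAttackStrength_edgeR (hE : ∀ a, ¬ E a a) : IsAttackStrength (edgeR E SE) where
  empty_undef s := if_neg fun h => h.1.ne_empty rfl
  subset_def S₁ S₂ s h hsub hne := by
    rw [rDef_edgeR_iff] at h ⊢
    exact ⟨hne, fun p hp => h.2 p (hsub hp)⟩
  union_def S₁ S₂ s h₁ h₂ := by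
    rw [rDef_edgeR_iff] at h₁ h₂ ⊢
    exact ⟨h₁.1.mono Set.subset_union_left, fun p hp => hp.elim (h₁.2 p) (h₂.2 p)⟩
  pos S₁ s n h := by
    obtain ⟨-, rfl⟩ := edgeR_eq_some_iff.1 h
    split_ifs <;> omega
  mono_source_cap S₁ s a n m k h ha hnm := by
    obtain ⟨⟨-, hall⟩, rfl⟩ := edgeR_eq_some_iff.1 h
    have hdef : ((S₁ \ {(a, n)}) ∪ {(a, m)}).Nonempty ∧
        ∀ p ∈ (S₁ \ {(a, n)}) ∪ {(a, m)}, E p.1 s.1 := by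
      refine ⟨⟨(a, m), Or.inr rfl⟩, ?_⟩
      rintro p (⟨hp, -⟩ | rfl)
      exacts [hall p hp, (hall _ ha : E a s.1)]
    refine ⟨_, edgeR_eq_some_iff.2 ⟨hdef, rfl⟩, ?_⟩
    split_ifs with h₁ h₂ <;> try omega
    obtain ⟨p, hp, hSE, h2⟩ := h₁
    refine (h₂ ?_).elim
    by_cases hpa : p = (a, n)
    · subst hpa
      exact ⟨(a, m), Or.inr rfl, hSE, h2.trans hnm⟩
    · exact ⟨p, Or.inl ⟨hp, hpa⟩, hSE, h2⟩
  mono_source_inter S₁ S₂ s k₁ k₂ k h₁ h₂ h := by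
    obtain ⟨-, rfl⟩ := edgeR_eq_some_iff.1 h₁
    obtain ⟨-, rfl⟩ := edgeR_eq_some_iff.1 h₂
    obtain ⟨-, rfl⟩ := edgeR_eq_some_iff.1 h
    split_ifs with h₀ h₁ h₂ <;> try omega
    all_goals
      obtain ⟨p, ⟨hp₁, hp₂⟩, hs⟩ := h₀
      first | exact (h₁ ⟨p, hp₁, hs⟩).elim | exact (h₂ ⟨p, hp₂, hs⟩).elim
  mono_target S₁ a n m k h _ _ := ⟨k, h, le_rfl⟩
  no_self S₁ s hs := if_neg fun h => hE _ (h.2 s hs)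

lemma attacks_edgeR_iff : Attacks (edgeR E SE) Y s ↔ ∃ p ∈ Y, E p.1 s.1 := by
  constructor
  · rintro ⟨T, hT, h⟩
    obtain ⟨⟨p, hp⟩, hE⟩ := rDef_edgeR_iff.1 h
    exact ⟨p, hT hp, hE p hp⟩
  · rintro ⟨p, hp, h⟩
    exact ⟨{p}, by simpa using hp, rDef_edgeR_iff.2 ⟨⟨p, rfl⟩, by simpa using h⟩⟩

lemma le_edgeStrength (hT : T ⊆ Y) (h : edgeR E SE T s = some n) :
    n ≤ edgeStrength E SE Y s := by
  obtain ⟨⟨⟨p, hp⟩, hE⟩, rfl⟩ := edgeR_eq_some_iff.1 h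
  have hatt : ∃ p ∈ Y, E p.1 s.1 := ⟨p, hT hp, hE p hp⟩
  unfold edgeStrength
  split_ifs with hT₂ hY₂ hY₁ <;> try omega
  obtain ⟨q, hq, hs⟩ := hT₂
  exact (hY₂ ⟨q, hT hq, hE q hq, hs⟩).elim

lemma exists_edgeR_eq_edgeStrength (h : ∃ p ∈ Y, E p.1 s.1) :
    ∃ T ⊆ Y, edgeR E SE T s = some (edgeStrength E SE Y s) := by
  unfold edgeStrength
  split_ifs with hY₂
  · obtain ⟨p, hp, hE, hs⟩ := hY₂
    exact ⟨{p}, by simpa using hp, edgeR_eq_some_iff.2 ⟨⟨⟨p, rfl⟩, by simpa using hE⟩,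
      by simp [hs]⟩⟩
  · obtain ⟨p, hp, hE⟩ := h
    refine ⟨{p}, by simpa using hp, edgeR_eq_some_iff.2 ⟨⟨⟨p, rfl⟩, by simpa using hE⟩, ?_⟩⟩
    rw [if_neg fun hs => hY₂ ⟨p, hp, hE, by simpa using hs⟩]

lemma vmax_edgeR : Vmax (edgeR E SE) Y s = edgeStrength E SE Y s := by
  by_cases hatt : ∃ p ∈ Y, E p.1 s.1
  · obtain ⟨T, hT, h⟩ := exists_edgeR_eq_edgeStrength (SE := SE) hatt
    exact IsGreatest.csSup_eq ⟨⟨T, hT, h⟩, fun n ⟨T', hT', h'⟩ => le_edgeStrength hT' h'⟩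
  · have hempty : {n | ∃ T ⊆ Y, edgeR E SE T s = some n} = ∅ :=
      Set.eq_empty_of_forall_notMem fun n ⟨T, hT, h⟩ =>
        hatt (attacks_edgeR_iff (SE := SE).1 ⟨T, hT, by simp [RDef, h]⟩)
    rw [Vmax, hempty, csSup_empty, edgeStrength, if_neg hatt,
      if_neg fun ⟨p, hp, hE, _⟩ => hatt ⟨p, hp, hE⟩]
    rfl

lemma alpha_edgeR :
    alpha (edgeR E SE) X = (fun s => (s.1, s.2 - edgeStrength E SE X s)) '' X := by
  simp only [alpha, vmax_edgeR]

lemma defeats_edgeR_iff : Defeats (edgeR E SE) Y s ↔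
    (∃ p ∈ Y, E p.1 s.1) ∧ s.2 ≤ edgeStrength E SE Y s := by
  constructor
  · rintro ⟨hatt, T, hT, n, h, -, hle⟩
    exact ⟨attacks_edgeR_iff.1 hatt, hle.trans (le_edgeStrength hT h)⟩
  · rintro ⟨hatt, hle⟩
    obtain ⟨T, hT, h⟩ := exists_edgeR_eq_edgeStrength (SE := SE) hatt
    exact ⟨attacks_edgeR_iff.2 hatt, T, hT, _, h, fun T' hT' m h' => le_edgeStrength hT' h', hle⟩

lemma confElim_edgeR_iff : ConfElim (edgeR E SE) Y ↔
    ∀ s ∈ Y, (∃ p ∈ Y, E p.1 s.1) → edgeStrength E SE Y s < s.2 := by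
  simp only [ConfElim, defeats_edgeR_iff, not_and, not_le]

lemma Defeats.mono_edgeR (hXY : X ⊆ Y) (h : Defeats (edgeR E SE) X s) :
    Defeats (edgeR E SE) Y s := by
  obtain ⟨hatt, T, hT, n, hn, -, hle⟩ := h
  obtain ⟨p, hp, hE⟩ := attacks_edgeR_iff.1 hatt
  exact defeats_edgeR_iff.2 ⟨⟨p, hXY hp, hE⟩, hle.trans (le_edgeStrength (hT.trans hXY) hn)⟩

lemma ConfElim.anti_edgeR (hXY : X ⊆ Y) (h : ConfElim (edgeR E SE) Y) :
    ConfElim (edgeR E SE) X :=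
  fun s hs hd => h s (hXY hs) (hd.mono_edgeR hXY)

lemma cDefeats_edgeR_iff (hs : s ∉ X) : CDefeats (edgeR E SE) X s ↔
    ConfElim (edgeR E SE) X ∧ Defeats (edgeR E SE) (alpha (edgeR E SE) X) s := by
  rw [cDefeats_iff_of_notMem hs, defeats_edgeR_iff, attacks_edgeR_iff]
  refine and_congr_right fun _ => and_congr_right fun hatt => ⟨?_, fun hle => ?_⟩
  · rintro ⟨T, hT, n, h, hle⟩
    exact hle.trans (le_edgeStrength hT h)
  · obtain ⟨T, hT, h⟩ := exists_edgeR_eq_edgeStrength (SE := SE) hatt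
    exact ⟨T, hT, _, h, hle⟩

lemma mem_undefAtt_edgeR_iff : s ∈ UndefAtt (edgeR E SE) S X Y ↔
    (s ∈ S ∧ ∃ x ∈ X, E s.1 x.1) ∧
      ¬ (ConfElim (edgeR E SE) Y ∧ Defeats (edgeR E SE) (alpha (edgeR E SE) Y) s) ∧ s ∉ Y := by
  simp only [UndefAtt, Attacker, Set.mem_ofPred_eq, attacks_edgeR_iff, Set.mem_singleton_iff,
    exists_eq_left]
  exact and_congr_right fun _ => ⟨fun ⟨h, hs⟩ => ⟨(cDefeats_edgeR_iff hs).not.1 h, hs⟩,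
    fun ⟨h, hs⟩ => ⟨(cDefeats_edgeR_iff hs).not.2 h, hs⟩⟩

lemma mem_maxSet_of_not_confElim_insert (hTS : T ⊆ S) (hT : Profitable (edgeR E SE) S X T)
    (h : ∀ x ∈ S, x ∉ T → ¬ ConfElim (edgeR E SE) (insert x T)) :
    T ∈ MaxSet (edgeR E SE) S X := by
  refine ⟨hTS, hT, fun Sy hTSy hSyS hSy => ?_⟩
  obtain ⟨x, hxSy, hxT⟩ := Set.exists_of_ssubset hTSy
  exact h x (hSyS hxSy) hxT (hSy.confElim.anti_edgeR (Set.insert_subset hxSy hTSy.subset))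

lemma eq_of_mem_maxSet_of_not_confElim_insert {Sx : Set (Arg A)}
    (hSx : Sx ∈ MaxSet (edgeR E SE) S X) (hTS : T ⊆ S) (hT : Profitable (edgeR E SE) S X T)
    (h : ∀ x ∈ S, x ∉ T → ¬ ConfElim (edgeR E SE) (insert x X)) : Sx = T := by
  refine eq_of_mem_maxSet hSx (fun x hx => ?_) hTS hT
  by_contra hxT
  have hXSx : X ⊆ Sx := hSx.2.1.1
  exact h x (hSx.1 hx) hxT (hSx.2.1.confElim.anti_edgeR (Set.insert_subset hx hXSx))

end EdgeGenerated

namespace WSNotSubsetM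

noncomputable abbrev att : AttFun ℕ := edgeR (fun x y => x = 1 ∧ y = 0) (fun _ _ => False)

def args : Set (Arg ℕ) := {(0, 2), (1, 1)}

def coalition : Set (Arg ℕ) := {(0, 2)}

lemma confElim_coalition : ConfElim att coalition := by
  simp [confElim_edgeR_iff, coalition]

lemma oneDirAttacked_coalition : OneDirAttacked att args coalition :=
  oneDirAttacked_of_not_attacks_alpha (sx := (1, 1)) (s := (0, 2)) confElim_coalition
    (Or.inl (by simp [args, coalition])) rfl (by simp [attacks_edgeR_iff])
    (by simp [attacks_edgeR_iff, alpha_edgeR, coalition])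

lemma profitable_args : Profitable att args coalition args :=
  profitable_of_oneDirAttacked (by simp [coalition, args]) oneDirAttacked_coalition
    (by simp [confElim_edgeR_iff, edgeStrength, args])
    (by simp [FewerAttackers, undefAtt_self_eq_empty])

lemma empty_mem_WSsem : ∅ ∈ WSsem att args coalition :=
  ⟨Set.empty_subset _, Or.inl (by
    simpa using profitableM_self_of_profitable confElim_coalition profitable_args)⟩

lemma empty_notMem_Msem : ∅ ∉ Msem att args coalition := by
  rintro ⟨-, -, -, hst, -⟩
  have hadm : CAdmissible att args coalition := stateLeq_empty_iff.1 (by simpa using hst)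
  refine not_cAdmissible_of_not_cDefeats (sx := (1, 1)) (s := (0, 2))
    (Or.inl (by simp [args, coalition])) (by simp [coalition]) (by simp [rDef_edgeR_iff]) ?_ hadm
  rw [cDefeats_edgeR_iff (by simp [coalition])]
  simp [defeats_edgeR_iff, alpha_edgeR, coalition]

noncomputable def framework : AF ℕ :=
  ⟨args, att, ⟨by simp [args], by simp [args], by simp [args]⟩, isAttackStrength_edgeR (by simp)⟩

theorem exists_not_WSsem_subset_Msem : ∃ (F : AF ℕ) (S₁ : Set (Arg ℕ)),
    S₁ ⊆ F.args ∧ ConfElim F.att S₁ ∧ ¬ WSsem F.att F.args S₁ ⊆ Msem F.att F.args S₁ :=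
  ⟨framework, coalition, by simp [framework, coalition, args], confElim_coalition,
    fun h => empty_notMem_Msem (h empty_mem_WSsem)⟩

end WSNotSubsetM

namespace MNotSubsetWS

def edge (x y : ℕ) : Prop := (x, y) ∈ [(2, 0), (5, 0), (3, 1), (4, 1), (0, 3), (1, 2)]

def strongEdge (x y : ℕ) : Prop := (x, y) ∈ [(0, 3), (1, 2)]

noncomputable abbrev att : AttFun ℕ := edgeR edge strongEdge

def args : Set (Arg ℕ) := {(0, 2), (1, 2), (2, 2), (3, 2), (4, 1), (5, 1)}
def left : Set (Arg ℕ) := {(0, 2)}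
def right : Set (Arg ℕ) := {(1, 2)}
def pair : Set (Arg ℕ) := {(0, 2), (1, 2)}
def maxPair : Set (Arg ℕ) := {(0, 2), (1, 2), (4, 1), (5, 1)}
def maxLeft : Set (Arg ℕ) := {(0, 2), (2, 2), (4, 1), (5, 1)}
def maxRight : Set (Arg ℕ) := {(1, 2), (3, 2), (4, 1), (5, 1)}

lemma confElim_left : ConfElim att left := by
  simp [confElim_edgeR_iff, edge, left]
lemma confElim_right : ConfElim att right := by
  simp [confElim_edgeR_iff, edge, right]
lemma confElim_pair : ConfElim att pair := by
  simp [confElim_edgeR_iff, edge, pair]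
lemma confElim_maxPair : ConfElim att maxPair := by
  simp [confElim_edgeR_iff, edgeStrength, edge, strongEdge, maxPair]
lemma confElim_maxLeft : ConfElim att maxLeft := by
  simp [confElim_edgeR_iff, edgeStrength, edge, strongEdge, maxLeft]
lemma confElim_maxRight : ConfElim att maxRight := by
  simp [confElim_edgeR_iff, edgeStrength, edge, strongEdge, maxRight]

lemma oneDirAttacked_left : OneDirAttacked att args left :=
  oneDirAttacked_of_not_attacks_alpha (sx := (2, 2)) (s := (0, 2)) confElim_left
    (Or.inl (by simp [args, left])) rfl (by simp [attacks_edgeR_iff, edge])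
    (by simp [attacks_edgeR_iff, alpha_edgeR, edge, left])

lemma oneDirAttacked_right : OneDirAttacked att args right :=
  oneDirAttacked_of_not_attacks_alpha (sx := (3, 2)) (s := (1, 2)) confElim_right
    (Or.inl (by simp [args, right])) rfl (by simp [attacks_edgeR_iff, edge])
    (by simp [attacks_edgeR_iff, alpha_edgeR, edge, right])

lemma oneDirAttacked_pair : OneDirAttacked att args pair :=
  oneDirAttacked_of_not_attacks_alpha (sx := (4, 1)) (s := (1, 2)) confElim_pair
    (Or.inl (by simp [args, pair])) (by simp [pair]) (by simp [attacks_edgeR_iff, edge])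
    (by simp [attacks_edgeR_iff, alpha_edgeR, Set.image_insert_eq, edge, pair])

lemma oneDirAttacked_maxPair : OneDirAttacked att args maxPair :=
  oneDirAttacked_of_not_attacks_alpha (sx := (4, 1)) (s := (1, 2)) confElim_maxPair
    (Or.inr (by simp [alpha_edgeR, edgeStrength, edge, maxPair])) (by simp [maxPair])
    (by simp [attacks_edgeR_iff, edge])
    (by simp [attacks_edgeR_iff, alpha_edgeR, Set.image_insert_eq, edge, maxPair])

lemma stateRank_maxPair : stateRank att args maxPair = 0 := by
  have hadm : ¬ CAdmissible att args maxPair := by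
    refine not_cAdmissible_of_not_cDefeats (sx := (2, 2)) (s := (0, 2))
      (Or.inl (by simp [args, maxPair])) (by simp [maxPair]) (by simp [rDef_edgeR_iff, edge]) ?_
    rw [cDefeats_edgeR_iff (by simp [maxPair])]
    simp [defeats_edgeR_iff, alpha_edgeR, Set.image_insert_eq, edgeStrength, edge, strongEdge,
      maxPair]
  simp [stateRank, hadm, oneDirAttacked_maxPair]

lemma undefAtt_left_left : UndefAtt att args left left = {(2, 2), (5, 1)} :=
  undefAtt_eq_of_forall_mem (by simp [args, Set.insert_subset_iff]) (by
    simp [mem_undefAtt_edgeR_iff, alpha_edgeR, confElim_edgeR_iff, defeats_edgeR_iff,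
      edgeStrength, edge, strongEdge, args, left])

lemma undefAtt_left_pair : UndefAtt att args left pair = {(5, 1)} :=
  undefAtt_eq_of_forall_mem (by simp [args]) (by
    simp [mem_undefAtt_edgeR_iff, alpha_edgeR, Set.image_insert_eq, confElim_edgeR_iff,
      defeats_edgeR_iff, edgeStrength, edge, strongEdge, args, left, pair])

lemma undefAtt_left_maxLeft : UndefAtt att args left maxLeft = ∅ :=
  undefAtt_eq_of_forall_mem (by simp [args]) (by
    simp [mem_undefAtt_edgeR_iff, alpha_edgeR, Set.image_insert_eq, confElim_edgeR_iff,
      defeats_edgeR_iff, edgeStrength, edge, strongEdge, args, left, maxLeft])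

lemma undefAtt_right_right : UndefAtt att args right right = {(3, 2), (4, 1)} :=
  undefAtt_eq_of_forall_mem (by simp [args, Set.insert_subset_iff]) (by
    simp [mem_undefAtt_edgeR_iff, alpha_edgeR, confElim_edgeR_iff, defeats_edgeR_iff,
      edgeStrength, edge, strongEdge, args, right])

lemma undefAtt_right_pair : UndefAtt att args right pair = {(4, 1)} :=
  undefAtt_eq_of_forall_mem (by simp [args]) (by
    simp [mem_undefAtt_edgeR_iff, alpha_edgeR, Set.image_insert_eq, confElim_edgeR_iff,
      defeats_edgeR_iff, edgeStrength, edge, strongEdge, args, right, pair])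

lemma undefAtt_right_maxRight : UndefAtt att args right maxRight = ∅ :=
  undefAtt_eq_of_forall_mem (by simp [args]) (by
    simp [mem_undefAtt_edgeR_iff, alpha_edgeR, Set.image_insert_eq, confElim_edgeR_iff,
      defeats_edgeR_iff, edgeStrength, edge, strongEdge, args, right, maxRight])

lemma undefAtt_pair_pair : UndefAtt att args pair pair = {(4, 1), (5, 1)} :=
  undefAtt_eq_of_forall_mem (by simp [args, Set.insert_subset_iff]) (by
    simp [mem_undefAtt_edgeR_iff, alpha_edgeR, Set.image_insert_eq, confElim_edgeR_iff,
      defeats_edgeR_iff, edgeStrength, edge, strongEdge, args, pair])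

lemma undefAtt_pair_maxPair : UndefAtt att args pair maxPair = {(2, 2), (3, 2)} :=
  undefAtt_eq_of_forall_mem (by simp [args, Set.insert_subset_iff]) (by
    simp [mem_undefAtt_edgeR_iff, alpha_edgeR, Set.image_insert_eq, confElim_edgeR_iff,
      defeats_edgeR_iff, edgeStrength, edge, strongEdge, args, pair, maxPair])

lemma undefAtt_maxPair_maxPair : UndefAtt att args maxPair maxPair = {(2, 2), (3, 2)} :=
  undefAtt_eq_of_forall_mem (by simp [args, Set.insert_subset_iff]) (by
    simp [mem_undefAtt_edgeR_iff, alpha_edgeR, Set.image_insert_eq, confElim_edgeR_iff,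
      defeats_edgeR_iff, edgeStrength, edge, strongEdge, args, maxPair])

lemma undefAtt_maxLeft_maxLeft : UndefAtt att args maxLeft maxLeft = {(1, 2)} :=
  undefAtt_eq_of_forall_mem (by simp [args]) (by
    simp [mem_undefAtt_edgeR_iff, alpha_edgeR, Set.image_insert_eq, confElim_edgeR_iff,
      defeats_edgeR_iff, edgeStrength, edge, strongEdge, args, maxLeft])

lemma undefAtt_maxRight_maxRight : UndefAtt att args maxRight maxRight = {(0, 2)} :=
  undefAtt_eq_of_forall_mem (by simp [args]) (by
    simp [mem_undefAtt_edgeR_iff, alpha_edgeR, Set.image_insert_eq, confElim_edgeR_iff,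
      defeats_edgeR_iff, edgeStrength, edge, strongEdge, args, maxRight])

lemma profitable_left_pair : Profitable att args left pair :=
  profitable_of_oneDirAttacked (by simp [left, pair]) oneDirAttacked_left confElim_pair
    (by simp [FewerAttackers, undefAtt_left_pair, undefAtt_left_left])

lemma profitable_right_pair : Profitable att args right pair :=
  profitable_of_oneDirAttacked (by simp [right, pair]) oneDirAttacked_right confElim_pair
    (by simp [FewerAttackers, undefAtt_right_pair, undefAtt_right_right])

lemma profitable_pair_maxPair : Profitable att args pair maxPair :=
  profitable_of_oneDirAttacked (by simp [pair, maxPair, Set.insert_subset_iff])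
    oneDirAttacked_pair confElim_maxPair
    (by simp [FewerAttackers, undefAtt_pair_maxPair, undefAtt_pair_pair])

lemma maxLeft_mem_maxSet : maxLeft ∈ MaxSet att args left :=
  mem_maxSet_of_not_confElim_insert (by simp [maxLeft, args, Set.insert_subset_iff])
    (profitable_of_oneDirAttacked (by simp [left, maxLeft]) oneDirAttacked_left
      confElim_maxLeft (by simp [FewerAttackers, undefAtt_left_maxLeft]))
    (by simp [confElim_edgeR_iff, edgeStrength, edge, strongEdge, args, maxLeft])

lemma maxRight_mem_maxSet : maxRight ∈ MaxSet att args right :=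
  mem_maxSet_of_not_confElim_insert (by simp [maxRight, args, Set.insert_subset_iff])
    (profitable_of_oneDirAttacked (by simp [right, maxRight]) oneDirAttacked_right
      confElim_maxRight (by simp [FewerAttackers, undefAtt_right_maxRight]))
    (by simp [confElim_edgeR_iff, edgeStrength, edge, strongEdge, args, maxRight])

lemma eq_maxPair_of_mem_maxSet {Sx : Set (Arg ℕ)} (h : Sx ∈ MaxSet att args pair) :
    Sx = maxPair :=
  eq_of_mem_maxSet_of_not_confElim_insert h (by simp [maxPair, args, Set.insert_subset_iff])
    profitable_pair_maxPair
    (by simp [confElim_edgeR_iff, edgeStrength, edge, strongEdge, args, pair, maxPair])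

lemma left_union_right : left ∪ right = pair := Set.singleton_union

lemma not_profitableM_pair {X T : Set (Arg ℕ)} (hT : T ∈ MaxSet att args X)
    (hcard : T.ncard = 4) (hext : extAttCount att args T = 1) :
    ¬ ProfitableM att args X pair :=
  not_profitableM_of_worse_maximum (fun _ => eq_maxPair_of_mem_maxSet) hT stateRank_maxPair
    (by simp [hcard, maxPair]) (by rw [hext, extAttCount, undefAtt_maxPair_maxPair]; simp)

lemma right_mem_Msem : right ∈ Msem att args left :=
  ⟨by simp [right, args], left_union_right ▸ profitable_left_pair,
    left_union_right ▸ profitable_right_pair⟩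

lemma right_notMem_WSsem : right ∉ WSsem att args left := by
  rintro ⟨-, hWS | hWS⟩ <;> rw [left_union_right] at hWS
  · exact not_profitableM_pair maxLeft_mem_maxSet (by simp [maxLeft])
      (by simp [extAttCount, undefAtt_maxLeft_maxLeft]) hWS
  · exact not_profitableM_pair maxRight_mem_maxSet (by simp [maxRight])
      (by simp [extAttCount, undefAtt_maxRight_maxRight]) hWS

noncomputable def framework : AF ℕ :=
  ⟨args, att, ⟨by simp [args], by simp [args], by simp [args]⟩,
    isAttackStrength_edgeR fun a => by simp [edge]; omega⟩

theorem exists_not_Msem_subset_WSsem : ∃ (F : AF ℕ) (S₁ : Set (Arg ℕ)),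
    S₁ ⊆ F.args ∧ ConfElim F.att S₁ ∧ ¬ Msem F.att F.args S₁ ⊆ WSsem F.att F.args S₁ :=
  ⟨framework, left, by simp [framework, left, args], confElim_left,
    fun h => right_notMem_WSsem (h right_mem_Msem)⟩

end MNotSubsetWS

end CoalitionArg

open CoalitionArg in
/-- `M` and `WS` are incomparable. -/
theorem M_WS_incomparable :
    (∃ (A : Type) (F : AF A) (S₁ : Set (Arg A)),
      S₁ ⊆ F.args ∧ ConfElim F.att S₁ ∧
      ¬ WSsem F.att F.args S₁ ⊆ Msem F.att F.args S₁) ∧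
    (∃ (A : Type) (F : AF A) (S₁ : Set (Arg A)),
      S₁ ⊆ F.args ∧ ConfElim F.att S₁ ∧
      ¬ Msem F.att F.args S₁ ⊆ WSsem F.att F.args S₁) :=
  ⟨⟨ℕ, WSNotSubsetM.exists_not_WSsem_subset_Msem⟩, ⟨ℕ, MNotSubsetWS.exists_not_Msem_subset_WSsem⟩⟩
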